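/- arXiv:1505.07839 — 3 statements merged into one kernel-verified Lean document; each statement's English description precedes it below -/
import Mathlib

section
/- Proof by contraction: let n, L, R ≥ 1, let α_1,…,α_L and β_1,…,β_R be positive reals, let I_1,…,I_L and J_1,…,J_R be subsets of {1,…,n}, and let x_i ∈ {0,1}^L and y_i ∈ {0,1}^R (for i = 1,…,n+1) be the associated occurrence vectors. Suppose f : {0,1}^L → {0,1}^R satisfies ‖f(x) − f(x')‖_β ≤ ‖x − x'‖_α for all x, x' ∈ {0,1}^L, and f(x_i) = y_i for all i = 1,…,n+1. Then for every graph model on n regions, Σ_{l=1}^L α_l S*(I_l) ≥ Σ_{r=1}^R β_r S*(J_r). -/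
open Classical

/-- A *graph model* on `n` regions: a finite graph with symmetric nonnegative edge
weights `w` (weight `0` meaning "no edge") and a partial coloring of the vertices by
the `n+1` boundary colors; `color v = none` means `v` is a bulk vertex, color
`Fin.castSucc i` represents boundary region `i ∈ {1,…,n}` and color `Fin.last n`
represents the purifying region `n+1`. -/
structure GraphModel (n : ℕ) where
  V : Type
  [fintypeV : Fintype V]
  w : V → V → ℝ
  symm : ∀ u v, w u v = w v u
  nonneg : ∀ u v, 0 ≤ w u v
  color : V → Option (Fin (n + 1))

attribute [instance] GraphModel.fintypeV

/-- `|C(W)|`: the total weight of the edges with exactly one endpoint in `W`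
(each unordered crossing edge `{u,v}` is counted exactly once, via its ordering
with `u ∈ W` and `v ∉ W`). -/
noncomputable def GraphModel.cutWeight {n : ℕ} (G : GraphModel n) (W : Set G.V) : ℝ :=
  ∑ u : G.V, ∑ v : G.V, if u ∈ W ∧ v ∉ W then G.w u v else 0

/-- `W` is an `I`-cut: `W` contains precisely the boundary vertices whose color lies
in `I ⊆ {1,…,n}`. -/
def GraphModel.IsCut {n : ℕ} (G : GraphModel n) (I : Finset (Fin n)) (W : Set G.V) : Prop :=
  ∀ v c, G.color v = some c → (v ∈ W ↔ ∃ i ∈ I, Fin.castSucc i = c)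

/-- The discrete entropy `S*(I)`: the minimal weight of an `I`-cut. -/
noncomputable def GraphModel.entropy {n : ℕ} (G : GraphModel n) (I : Finset (Fin n)) : ℝ :=
  sInf (G.cutWeight '' {W | G.IsCut I W})

/-- The holographic entropy vector of a graph model: the collection of all discrete
entropies `S*(I)` of nonempty subsets `I ⊆ {1,…,n}`. -/
noncomputable def GraphModel.entropyVector {n : ℕ} (G : GraphModel n)
    (I : {I : Finset (Fin n) // I.Nonempty}) : ℝ :=
  G.entropy I.1

/-- weighted Hamming norm `‖x − x'‖_α` of the difference of two bitstrings -/
noncomputable def wnorm {L : ℕ} (α : Fin L → ℝ) (x x' : Fin L → Bool) : ℝ :=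
  ∑ l, if x l ≠ x' l then α l else 0

-- auxiliary lemmas
lemma cut_image_finite {n : ℕ} (G : GraphModel n) (I : Finset (Fin n)) :
    (G.cutWeight '' {W | G.IsCut I W}).Finite :=
  Set.Finite.image _ (Set.toFinite _)

lemma cut_image_nonempty {n : ℕ} (G : GraphModel n) (I : Finset (Fin n)) :
    (G.cutWeight '' {W | G.IsCut I W}).Nonempty := by
  refine ⟨G.cutWeight {v | ∃ i ∈ I, G.color v = some (Fin.castSucc i)}, ⟨_, ?_, rfl⟩⟩
  intro v c hc
  simp only [Set.mem_setOf_eq, hc, Option.some.injEq]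
  tauto

lemma entropy_le_cut {n : ℕ} (G : GraphModel n) (I : Finset (Fin n)) (W : Set G.V)
    (h : G.IsCut I W) : G.entropy I ≤ G.cutWeight W :=
  csInf_le (cut_image_finite G I).bddBelow ⟨W, h, rfl⟩

lemma exists_min_cut {n : ℕ} (G : GraphModel n) (I : Finset (Fin n)) :
    ∃ W, G.IsCut I W ∧ G.entropy I = G.cutWeight W := by
  obtain ⟨W, hW, hval⟩ := (cut_image_nonempty G I).csInf_mem (cut_image_finite G I)
  exact ⟨W, hW, hval.symm⟩

lemma cutWeight_half {n : ℕ} (G : GraphModel n) (W : Set G.V) :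
    G.cutWeight W = (∑ u, ∑ v, if (u ∈ W) ≠ (v ∈ W) then G.w u v else 0) / 2 := by
  classical
  have key : ∀ u v : G.V, (if (u ∈ W) ≠ (v ∈ W) then G.w u v else 0) =
      (if u ∈ W ∧ v ∉ W then G.w u v else 0) + (if v ∈ W ∧ u ∉ W then G.w u v else 0) := by
    intro u v
    by_cases hu : u ∈ W <;> by_cases hv : v ∈ W <;> simp [hu, hv, eq_iff_iff]
  have h2 : (∑ u, ∑ v, if (u ∈ W) ≠ (v ∈ W) then G.w u v else 0)
      = G.cutWeight W + G.cutWeight W := by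
    simp only [key, Finset.sum_add_distrib]
    congr 1
    rw [Finset.sum_comm]
    unfold GraphModel.cutWeight
    refine Finset.sum_congr rfl fun u _ => Finset.sum_congr rfl fun v _ => ?_
    rw [G.symm u v]
  rw [h2]; ring

lemma sum_cut_eq {n : ℕ} (G : GraphModel n) {K : ℕ} (γ : Fin K → ℝ)
    (W : Fin K → Set G.V) (Z : G.V → Fin K → Bool)
    (h : ∀ v k, v ∈ W k ↔ Z v k = true) :
    ∑ k, γ k * G.cutWeight (W k) = (∑ u, ∑ v, G.w u v * wnorm γ (Z u) (Z v)) / 2 := by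
  classical
  have ptwise : ∀ u v : G.V,
      G.w u v * wnorm γ (Z u) (Z v) = ∑ k, γ k * (if (u ∈ W k) ≠ (v ∈ W k) then G.w u v else 0) := by
    intro u v
    rw [wnorm, Finset.mul_sum]
    refine Finset.sum_congr rfl fun k _ => ?_
    have hiff : ((u ∈ W k) ≠ (v ∈ W k)) ↔ (Z u k ≠ Z v k) := by
      rw [h u k, h v k]
      constructor
      · intro hne hbe; exact hne (by rw [hbe])
      · intro hne hpe
        exact hne (by
          rw [eq_iff_iff] at hpe
          cases hb : Z u k <;> cases hb' : Z v k <;> simp_all)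
    by_cases hc : Z u k ≠ Z v k
    · rw [if_pos hc, if_pos (hiff.mpr hc)]; ring
    · rw [if_neg hc, if_neg (fun hh => hc (hiff.mp hh))]; ring
  have hsw : (∑ u, ∑ v, G.w u v * wnorm γ (Z u) (Z v))
      = ∑ k, γ k * (∑ u, ∑ v, if (u ∈ W k) ≠ (v ∈ W k) then G.w u v else 0) := by
    simp only [ptwise]
    calc (∑ u, ∑ v, ∑ k, γ k * (if (u ∈ W k) ≠ (v ∈ W k) then G.w u v else 0))
        = ∑ u, ∑ k, ∑ v, γ k * (if (u ∈ W k) ≠ (v ∈ W k) then G.w u v else 0) :=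
          Finset.sum_congr rfl fun u _ => Finset.sum_comm
      _ = ∑ k, ∑ u, ∑ v, γ k * (if (u ∈ W k) ≠ (v ∈ W k) then G.w u v else 0) :=
          Finset.sum_comm
      _ = ∑ k, γ k * (∑ u, ∑ v, if (u ∈ W k) ≠ (v ∈ W k) then G.w u v else 0) := by
          refine Finset.sum_congr rfl fun k _ => ?_
          rw [Finset.mul_sum]
          exact Finset.sum_congr rfl fun u _ => (Finset.mul_sum _ _ _).symm
  rw [hsw]
  rw [Finset.sum_div]
  refine Finset.sum_congr rfl fun k _ => ?_
  rw [cutWeight_half, mul_div_assoc]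

/-- Proof by contraction: if `f : {0,1}^L → {0,1}^R` is a
`‖·‖_α`-`‖·‖_β`-contraction mapping the occurrence vectors `x_i` (of the subsystems
`I_1,…,I_L`) to the occurrence vectors `y_i` (of the subsystems `J_1,…,J_R`) for all
`i = 1,…,n+1`, then `Σ_l α_l S*(I_l) ≥ Σ_r β_r S*(J_r)` holds for every graph model
on `n` regions. -/
theorem stmt8 (n L R : ℕ) (hn : 1 ≤ n) (hL : 1 ≤ L) (hR : 1 ≤ R)
    (α : Fin L → ℝ) (β : Fin R → ℝ) (hα : ∀ l, 0 < α l) (hβ : ∀ r, 0 < β r)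
    (Isys : Fin L → Finset (Fin n)) (Jsys : Fin R → Finset (Fin n))
    (f : (Fin L → Bool) → (Fin R → Bool))
    (hf : ∀ x x' : Fin L → Bool, wnorm β (f x) (f x') ≤ wnorm α x x')
    (hinit : ∀ i : Fin (n + 1),
      f (fun l => decide (∃ j ∈ Isys l, Fin.castSucc j = i)) =
        fun r => decide (∃ j ∈ Jsys r, Fin.castSucc j = i))
    (G : GraphModel n) :
    ∑ r, β r * G.entropy (Jsys r) ≤ ∑ l, α l * G.entropy (Isys l) := by
  classical
  choose Wl hWl hval using fun l => exists_min_cut G (Isys l)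
  set X : G.V → Fin L → Bool := fun v l => decide (v ∈ Wl l) with hX
  set Y : G.V → Fin R → Bool := fun v => f (X v) with hY
  set W' : Fin R → Set G.V := fun r => {v | Y v r = true} with hW'
  have hYcol : ∀ (v : G.V) (c : Fin (n+1)), G.color v = some c →
      Y v = fun r => decide (∃ j ∈ Jsys r, Fin.castSucc j = c) := by
    intro v c hc
    have hXv : X v = fun l => decide (∃ j ∈ Isys l, Fin.castSucc j = c) := by
      funext l
      exact decide_eq_decide.mpr (hWl l v c hc)
    rw [hY]
    show f (X v) = _
    rw [hXv, hinit c]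
  have hcut' : ∀ r, G.IsCut (Jsys r) (W' r) := by
    intro r v c hc
    have := hYcol v c hc
    simp only [hW', Set.mem_setOf_eq, this]
    exact decide_eq_true_iff
  have hXmem : ∀ (v : G.V) (l : Fin L), v ∈ Wl l ↔ X v l = true := by
    intro v l; simp [hX]
  have hYmem : ∀ (v : G.V) (r : Fin R), v ∈ W' r ↔ Y v r = true := by
    intro v r; simp [hW']
  calc ∑ r, β r * G.entropy (Jsys r)
      ≤ ∑ r, β r * G.cutWeight (W' r) := by
        refine Finset.sum_le_sum fun r _ => ?_
        exact mul_le_mul_of_nonneg_left (entropy_le_cut G (Jsys r) (W' r) (hcut' r)) (hβ r).le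
    _ = (∑ u, ∑ v, G.w u v * wnorm β (Y u) (Y v)) / 2 := sum_cut_eq G β W' Y hYmem
    _ ≤ (∑ u, ∑ v, G.w u v * wnorm α (X u) (X v)) / 2 := by
        gcongr (?_ : ℝ) / 2
        refine Finset.sum_le_sum fun u _ => Finset.sum_le_sum fun v _ => ?_
        exact mul_le_mul_of_nonneg_left (hf (X u) (X v)) (G.nonneg u v)
    _ = ∑ l, α l * G.cutWeight (Wl l) := (sum_cut_eq G α Wl X hXmem).symm
    _ = ∑ l, α l * G.entropy (Isys l) := by
        refine Finset.sum_congr rfl fun l _ => ?_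
        rw [hval l]
end

section
/- The map f_k is a proof by contraction of the cyclic inequality C_{2k+1}(k+1,k): for every k ≥ 1, define π_k to be the permutation of coordinates (v_0, v_1, …, v_{2k}) ↦ (v_0, v_2, v_4, …, v_{2k}, v_1, v_3, …, v_{2k−1}), and define f_k : {0,1}^{2k+1} → {0,1}^{2k+2} by f_k(0) := (0, 0) and, for x ≠ 0, f_k(x) := ( complement of π_k(g_k(π_k^{−1}(x))) , 1 ), where the complement flips every bit. Then: (i) f_k is a contraction with respect to Hamming distance, i.e. ‖f_k(x) − f_k(x')‖₁ ≤ ‖x − x'‖₁ for all x, x' ∈ {0,1}^{2k+1}; and (ii) f_k maps the occurrence vectors onto each other: f_k(x_i) = y_i for i = 1,…,2k+2, where x_i (for i ≤ 2k+1) is the cyclic shift by i−1 of the bitstring 1^{k+1}0^k and x_{2k+2} := 0, and y_i (for i ≤ 2k+1) is the cyclic shift by i−1 of 0^{k+1}1^k followed by a final coordinate equal to 1 (i.e. y_i = (complement of x_i, 1)), while y_{2k+2} := 0. -/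
/-!
Index the coordinates by `ℤ/(2k+1)`. Then `π_k` is multiplication by `2`, `π_k⁻¹` is
multiplication by `k + 1`, and `g_k(x)` has a zero at `i + 1` exactly when `x i = 1` and the run
of zeros following `i` has odd length. Clearing a single one of `x`, at `p`, merges the run after
`p` into the run after the last one `i` before `p`, so `g_k(x)` can only change at `p + 1` (if the
run after `p` is odd) or at `i + 1` (if it is even). Hence `g_k` is 1-Lipschitz for the Hamming
distance, and so is its conjugate by `π_k` and complementation. Comparing `x ≠ 0` with a string
having a single one, which `g_k` sends to all ones, shows that `g_k(x)` is at distance less than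
`‖x‖₁` from all ones; this pays for the last coordinate when one argument of `f_k` is `0`.
Finally every zero of `π_k⁻¹(x_i)` is followed by a one, and `g_k` fixes such strings.
-/

/-- The number of consecutive zeros of `x` cyclically following position `j`
(capped at `2k`, which is no restriction when `x` is nonzero). -/
def runAfter (k : ℕ) (x : Fin (2 * k + 1) → Bool) (j : Fin (2 * k + 1)) : ℕ :=
  (Finset.univ.filter fun t : Fin (2 * k + 1) =>
    0 < (t : ℕ) ∧ ∀ s : Fin (2 * k + 1), 0 < (s : ℕ) → (s : ℕ) ≤ (t : ℕ) →
      x (j + s) = false).card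

/-- The map `g_k` on bitstrings of length `2k+1` (coordinates regarded cyclically):
it fixes every coordinate equal to `1`; on each maximal cyclic block of consecutive
zeros it maps every coordinate to `1`, except that on blocks of odd length the first
coordinate of the block (in cyclic order) stays `0`. -/
def gmap (k : ℕ) (x : Fin (2 * k + 1) → Bool) : Fin (2 * k + 1) → Bool :=
  fun j =>
    if x j = false ∧ x (j - 1) = true ∧ runAfter k x j % 2 = 0 then false else true

open Fin.NatCast in
/-- Coordinate reindexing of the permutation
`π_k : (v_0,…,v_{2k}) ↦ (v_0, v_2, …, v_{2k}, v_1, v_3, …, v_{2k−1})`,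
so that `(π_k v) j = v (tau k j)`. -/
def tau (k : ℕ) (j : Fin (2 * k + 1)) : Fin (2 * k + 1) :=
  if (j : ℕ) ≤ k then ((2 * (j : ℕ) : ℕ) : Fin (2 * k + 1))
  else ((2 * (j : ℕ) - (2 * k + 1) : ℕ) : Fin (2 * k + 1))

open Fin.NatCast in
/-- The inverse reindexing, so that `(π_k⁻¹ v) j = v (tauInv k j)`. -/
def tauInv (k : ℕ) (j : Fin (2 * k + 1)) : Fin (2 * k + 1) :=
  if (j : ℕ) % 2 = 0 then (((j : ℕ) / 2 : ℕ) : Fin (2 * k + 1))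
  else ((k + ((j : ℕ) + 1) / 2 : ℕ) : Fin (2 * k + 1))

/-- The occurrence vector `x_i` (with zero-based index `i`, matching the paper's
`x_{i+1}`): the cyclic shift by `i` of the bitstring `1^{k+1} 0^k`. -/
def xOcc (k : ℕ) (i : Fin (2 * k + 1)) : Fin (2 * k + 1) → Bool :=
  fun j => decide (((j - i : Fin (2 * k + 1)) : ℕ) ≤ k)

/-- The map `f_k : {0,1}^{2k+1} → {0,1}^{2k+2}` of the proof by contraction of the
cyclic inequality `C_{2k+1}(k+1,k)`: `f_k(0) = (0,0)` and
`f_k(x) = (complement of π_k(g_k(π_k⁻¹(x))), 1)` for `x ≠ 0`. -/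
def fmap (k : ℕ) (x : Fin (2 * k + 1) → Bool) : Fin (2 * k + 1 + 1) → Bool :=
  if x = fun _ => false then fun _ => false
  else Fin.snoc (fun j => ! gmap k (fun i => x (tauInv k i)) (tau k j)) true

section Hamming

variable {ι β : Type*} [Fintype ι] [DecidableEq β]

theorem hammingDist_comp_perm (σ : Equiv.Perm ι) (x y : ι → β) :
    hammingDist (x ∘ σ) (y ∘ σ) = hammingDist x y := by
  simp only [hammingDist]
  exact Finset.card_equiv σ (by simp)

variable [DecidableEq ι]

theorem hammingDist_update_add_one {x y : ι → β} {i : ι} (h : x i ≠ y i) :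
    hammingDist (Function.update x i (y i)) y + 1 = hammingDist x y := by
  have hfilter : ({j | Function.update x i (y i) j ≠ y j} : Finset ι)
      = ({j | x j ≠ y j} : Finset ι).erase i := by
    ext j
    rcases eq_or_ne j i with rfl | hj
    · simp
    · simp [hj]
  rw [hammingDist, hfilter, Finset.card_erase_add_one (by simpa using h), hammingDist]

theorem hammingDist_le_of_forall_update {κ γ : Type*} [Fintype κ] [DecidableEq γ]
    (f : (ι → β) → κ → γ) (hf : ∀ x i b, hammingDist (f x) (f (Function.update x i b)) ≤ 1)
    (x y : ι → β) : hammingDist (f x) (f y) ≤ hammingDist x y := by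
  induction hd : hammingDist x y generalizing x with
  | zero => rw [hammingDist_eq_zero.1 hd, hammingDist_self]
  | succ d ih =>
    obtain ⟨i, hi⟩ : ∃ i, x i ≠ y i := Function.ne_iff.1 (hammingDist_ne_zero.1 (by omega))
    have hd' := hammingDist_update_add_one hi
    calc hammingDist (f x) (f y)
        ≤ hammingDist (f x) (f (Function.update x i (y i)))
          + hammingDist (f (Function.update x i (y i))) (f y) := hammingDist_triangle _ _ _
      _ ≤ 1 + d := add_le_add (hf x i (y i)) (ih _ (by omega))
      _ = d + 1 := add_comm 1 d

end Hamming

theorem hammingDist_snoc {n : ℕ} (u v : Fin n → Bool) (a b : Bool) :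
    hammingDist (Fin.snoc u a : Fin (n + 1) → Bool) (Fin.snoc v b)
      = hammingDist u v + if a = b then 0 else 1 := by
  simp only [hammingDist, Finset.card_filter, Fin.sum_univ_castSucc, Fin.snoc_castSucc,
    Fin.snoc_last]
  simp

theorem hammingDist_ite_snoc_le {ι : Type*} [Fintype ι] {m : ℕ}
    (h : (ι → Bool) → Fin m → Bool) (hlip : ∀ x y, hammingDist (h x) (h y) ≤ hammingDist x y)
    (hpos : ∀ x, x ≠ (fun _ => false) →
      hammingDist (h x) (fun _ => false) < hammingDist x (fun _ => false))
    (x y : ι → Bool) :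
    hammingDist
      (if x = (fun _ => false) then (fun _ => false)
        else (Fin.snoc (h x) true : Fin (m + 1) → Bool))
      (if y = (fun _ => false) then (fun _ => false) else Fin.snoc (h y) true)
      ≤ hammingDist x y := by
  have hzero : ∀ z, z ≠ (fun _ => false) →
      hammingDist (Fin.snoc (h z) true : Fin (m + 1) → Bool) (fun _ => false)
        ≤ hammingDist z (fun _ => false) := fun z hz => by
    rw [← Fin.snoc_init_self (fun _ => false : Fin (m + 1) → Bool), hammingDist_snoc,
      if_neg (by simp)]
    exact hpos z hz
  split_ifs with hx hy hy
  · simp [hx, hy]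
  · rw [hx, hammingDist_comm, hammingDist_comm _ y]
    exact hzero y hy
  · rw [hy]
    exact hzero x hx
  · rw [hammingDist_snoc, if_pos rfl, add_zero]
    exact hlip x y

namespace Fin

open Fin.NatCast Fin.CommRing

variable {n : ℕ}

theorem val_sub_add_val_sub {a b : Fin n} (h : a ≠ b) :
    ((a - b : Fin n) : ℕ) + ((b - a : Fin n) : ℕ) = n := by
  rcases lt_or_gt_of_ne h with h | h
  · rw [coe_sub_iff_lt.2 h, coe_sub_iff_le.2 h.le]; omega
  · rw [coe_sub_iff_lt.2 h, coe_sub_iff_le.2 h.le]; omega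

variable [NeZero n]

theorem add_natCast_eq_iff {j p : Fin n} {s : ℕ} (hs : s < n) :
    j + (s : Fin n) = p ↔ s = (p - j : Fin n) := by
  rw [← eq_sub_iff_add_eq', Fin.ext_iff, val_cast_of_lt hs]

theorem add_natCast_ne_self (j : Fin n) {s : ℕ} (h1 : 1 ≤ s) (hs : s < n) :
    j + (s : Fin n) ≠ j := by
  rw [Ne, add_natCast_eq_iff hs, sub_self, val_zero]
  omega

theorem add_natCast_val_sub (j p : Fin n) : j + (((p - j : Fin n) : ℕ) : Fin n) = p := by
  rw [cast_val_eq_self, add_sub_cancel]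

theorem add_natCast_val_sub_add (j p : Fin n) (t : ℕ) :
    j + (((p - j : Fin n) + t : ℕ) : Fin n) = p + t := by
  rw [Nat.cast_add, ← add_assoc, add_natCast_val_sub]

theorem add_natCast_add_one (j : Fin n) (s : ℕ) : j + ((s + 1 : ℕ) : Fin n) = j + 1 + s := by
  push_cast
  ring

end Fin

section Cyclic

open Fin.NatCast Fin.CommRing

variable {k : ℕ}

theorem runAfter_eq_findGreatest (x : Fin (2 * k + 1) → Bool) (j : Fin (2 * k + 1)) :
    runAfter k x j = Nat.findGreatest
      (fun r => ∀ s : ℕ, 1 ≤ s → s ≤ r → x (j + s) = false) (2 * k) := by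
  set P : ℕ → Prop := fun r => ∀ s : ℕ, 1 ≤ s → s ≤ r → x (j + s) = false
  set R := Nat.findGreatest P (2 * k)
  have hR : R < 2 * k + 1 := Nat.lt_succ_of_le (Nat.findGreatest_le _)
  have hP_iff : ∀ t : Fin (2 * k + 1), P t ↔ (t : ℕ) ≤ R := fun t =>
    ⟨Nat.le_findGreatest (Nat.lt_succ_iff.1 t.isLt), fun ht s h1 h2 =>
      Nat.findGreatest_spec (P := P) (Nat.zero_le _) (fun s h1 h0 => by omega) s h1
        (h2.trans ht)⟩
  have hfilter : (Finset.univ.filter fun t : Fin (2 * k + 1) =>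
      0 < (t : ℕ) ∧ ∀ s : Fin (2 * k + 1), 0 < (s : ℕ) → (s : ℕ) ≤ t → x (j + s) = false)
      = Finset.Ioc 0 ⟨R, hR⟩ := by
    ext t
    simp only [Finset.mem_filter, Finset.mem_univ, true_and, Finset.mem_Ioc, Fin.lt_def,
      Fin.le_def, Fin.val_zero]
    rw [← hP_iff]
    refine and_congr_right fun _ => ⟨fun h s h1 h2 => ?_, fun h s h1 h2 => ?_⟩
    · have hs : s < 2 * k + 1 := h2.trans_lt t.isLt
      rw [show (s : Fin (2 * k + 1)) = ⟨s, hs⟩ from Fin.ext (Fin.val_cast_of_lt hs)]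
      exact h ⟨s, hs⟩ h1 h2
    · simpa using h s h1 h2
  rw [runAfter, hfilter, Fin.card_Ioc]
  rfl

theorem apply_add_eq_false_of_le_runAfter {x : Fin (2 * k + 1) → Bool} {j : Fin (2 * k + 1)}
    {s : ℕ} (h1 : 1 ≤ s) (h2 : s ≤ runAfter k x j) : x (j + s) = false := by
  rw [runAfter_eq_findGreatest] at h2
  refine Nat.findGreatest_spec (P := fun r => ∀ s : ℕ, 1 ≤ s → s ≤ r → x (j + s) = false)
    (Nat.zero_le _) ?_ s h1 h2
  intro s h1 h0
  omega

theorem apply_add_runAfter_add_one {x : Fin (2 * k + 1) → Bool} {j : Fin (2 * k + 1)}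
    (h : runAfter k x j < 2 * k) : x (j + (runAfter k x j + 1 : ℕ)) = true := by
  have hmax := Nat.findGreatest_is_greatest (Nat.lt_succ_self _)
    (runAfter_eq_findGreatest x j ▸ h)
  rw [← runAfter_eq_findGreatest] at hmax
  push Not at hmax
  obtain ⟨s, h1, h2, hs⟩ := hmax
  obtain rfl | hlt := (Nat.le_succ_iff.1 h2).symm
  · simpa using hs
  · exact absurd (apply_add_eq_false_of_le_runAfter h1 hlt) hs

theorem runAfter_eq_of {x : Fin (2 * k + 1) → Bool} {j : Fin (2 * k + 1)} {r : ℕ}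
    (hzero : ∀ s : ℕ, 1 ≤ s → s ≤ r → x (j + s) = false)
    (hone : x (j + (r + 1 : ℕ)) = true) : runAfter k x j = r := by
  have hr : r ≤ 2 * k := by
    by_contra! hr
    have hcast : ((r + 1 : ℕ) : Fin (2 * k + 1))
        = ((r + 1 - (2 * k + 1) : ℕ) : Fin (2 * k + 1)) := by
      rw [Nat.cast_sub (by omega), Fin.natCast_self, sub_zero]
    rw [hcast, hzero _ (by omega) (by omega)] at hone
    exact Bool.false_ne_true hone
  rw [runAfter_eq_findGreatest, Nat.findGreatest_eq_iff]
  refine ⟨hr, fun _ => hzero, fun n hn _ hP => ?_⟩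
  rw [hP (r + 1) (by omega) hn] at hone
  exact Bool.false_ne_true hone

theorem runAfter_lt_val_sub {x : Fin (2 * k + 1) → Bool} {j q : Fin (2 * k + 1)}
    (hq : x q = true) (hqj : q ≠ j) : runAfter k x j < (q - j : Fin (2 * k + 1)) := by
  by_contra! h
  have hpos : 1 ≤ ((q - j : Fin (2 * k + 1)) : ℕ) :=
    Nat.one_le_iff_ne_zero.2 (Fin.val_ne_zero_iff.2 (sub_ne_zero.2 hqj))
  have hzero := apply_add_eq_false_of_le_runAfter hpos h
  rw [Fin.add_natCast_val_sub, hq] at hzero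
  exact Bool.false_ne_true hzero.symm

theorem runAfter_eq_runAfter_add_one_add_one {x : Fin (2 * k + 1) → Bool}
    {i : Fin (2 * k + 1)} (hi : x i = true) (hi1 : x (i + 1) = false) :
    runAfter k x i = runAfter k x (i + 1) + 1 := by
  have hne : i ≠ i + 1 := fun h => by simp [← h, hi] at hi1
  have hlt : runAfter k x (i + 1) < 2 * k :=
    (runAfter_lt_val_sub hi hne).trans_le (Nat.lt_succ_iff.1 (Fin.isLt _))
  refine runAfter_eq_of (fun s h1 h2 => ?_) ?_
  · obtain ⟨s, rfl⟩ := Nat.exists_eq_add_of_le' h1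
    rw [Fin.add_natCast_add_one]
    rcases Nat.eq_zero_or_pos s with rfl | hs
    · simpa using hi1
    · exact apply_add_eq_false_of_le_runAfter hs (by omega)
  · rw [Fin.add_natCast_add_one]
    exact apply_add_runAfter_add_one hlt

def oneBeforeOddRun (k : ℕ) (x : Fin (2 * k + 1) → Bool) (i : Fin (2 * k + 1)) : Bool :=
  x i && decide (Odd (runAfter k x i))

theorem gmap_add_one (x : Fin (2 * k + 1) → Bool) (i : Fin (2 * k + 1)) :
    gmap k x (i + 1) = !oneBeforeOddRun k x i := by
  rw [gmap, oneBeforeOddRun, add_sub_cancel_right]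
  cases hi : x i
  · simp
  cases hi1 : x (i + 1)
  · simp [runAfter_eq_runAfter_add_one_add_one hi hi1, Nat.odd_add_one, Nat.even_iff]
  · have h0 : runAfter k x i = 0 :=
      runAfter_eq_of (fun s h1 h2 => by omega) (by simpa using hi1)
    simp [h0]

theorem runAfter_update_of_lt {z : Fin (2 * k + 1) → Bool} {i p : Fin (2 * k + 1)}
    (h : runAfter k z i + 1 < (p - i : Fin (2 * k + 1))) (b : Bool) :
    runAfter k (Function.update z p b) i = runAfter k z i := by
  have hd := (p - i).isLt
  have hne : ∀ s : ℕ, s ≤ runAfter k z i + 1 → i + (s : Fin (2 * k + 1)) ≠ p := fun s hs => by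
    rw [Ne, Fin.add_natCast_eq_iff (by omega)]
    omega
  refine runAfter_eq_of (fun s h1 h2 => ?_) ?_
  · rw [Function.update_of_ne (hne s (by omega))]
    exact apply_add_eq_false_of_le_runAfter h1 h2
  · rw [Function.update_of_ne (hne _ le_rfl)]
    exact apply_add_runAfter_add_one (by omega)

theorem runAfter_update_false {z : Fin (2 * k + 1) → Bool} {i p : Fin (2 * k + 1)}
    (hi : z i = true) (h : runAfter k z i + 1 = (p - i : Fin (2 * k + 1))) :
    runAfter k (Function.update z p false) i = (p - i : Fin (2 * k + 1)) + runAfter k z p := by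
  set d : ℕ := ((p - i : Fin (2 * k + 1)) : ℕ)
  set m := runAfter k z p
  have hip : i ≠ p := by rintro rfl; simp [d] at h
  have hm : m < (i - p : Fin (2 * k + 1)) := runAfter_lt_val_sub hi hip
  have hsum := Fin.val_sub_add_val_sub hip.symm
  refine runAfter_eq_of (fun s h1 h2 => ?_) ?_
  · rcases lt_trichotomy s d with hs | rfl | hs
    · have hne : i + (s : Fin (2 * k + 1)) ≠ p := by
        rw [Ne, Fin.add_natCast_eq_iff (by omega)]
        omega
      rw [Function.update_of_ne hne]
      exact apply_add_eq_false_of_le_runAfter h1 (by omega)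
    · rw [Fin.add_natCast_val_sub, Function.update_self]
    · obtain ⟨t, rfl⟩ := Nat.exists_eq_add_of_lt hs
      rw [add_assoc, Fin.add_natCast_val_sub_add,
        Function.update_of_ne (Fin.add_natCast_ne_self p (by omega) (by omega))]
      exact apply_add_eq_false_of_le_runAfter (by omega) (by omega)
  · rw [add_assoc, Fin.add_natCast_val_sub_add,
      Function.update_of_ne (Fin.add_natCast_ne_self p (by omega) (by omega))]
    exact apply_add_runAfter_add_one (by omega)

theorem eq_of_runAfter_add_one_eq_val_sub {x : Fin (2 * k + 1) → Bool}
    {i i' p : Fin (2 * k + 1)} (hi : x i = true) (hi' : x i' = true)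
    (h : runAfter k x i + 1 = (p - i : Fin (2 * k + 1)))
    (h' : runAfter k x i' + 1 = (p - i' : Fin (2 * k + 1))) : i = i' := by
  wlog hle : ((p - i : Fin (2 * k + 1)) : ℕ) ≤ (p - i' : Fin (2 * k + 1)) generalizing i i'
  · exact (this hi' hi h' h (by omega)).symm
  have hp := Fin.add_natCast_val_sub i p
  have hp' := Fin.add_natCast_val_sub i' p
  by_contra hne
  have hlt : ((p - i : Fin (2 * k + 1)) : ℕ) < (p - i' : Fin (2 * k + 1)) :=
    hle.lt_of_ne fun heq => hne (sub_right_injective (Fin.ext heq))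
  have hzero := apply_add_eq_false_of_le_runAfter (x := x) (j := i')
    (s := (p - i' : Fin (2 * k + 1)) - (p - i : Fin (2 * k + 1))) (by omega) (by omega)
  rw [Nat.cast_sub hle] at hzero
  rw [show i' + (((p - i' : Fin (2 * k + 1)) : ℕ) - ((p - i : Fin (2 * k + 1)) : ℕ)
      : Fin (2 * k + 1)) = i by linear_combination hp' - hp, hi] at hzero
  exact Bool.false_ne_true hzero.symm

/-- Clearing the one at `p` only affects `p` itself and the last one before `p`, whose zero run
it extends by `1 + runAfter k z p`. -/
theorem eq_or_runAfter_add_one_eq_of_oneBeforeOddRun_ne {z : Fin (2 * k + 1) → Bool}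
    {p i : Fin (2 * k + 1)} (hp : z p = true)
    (h : oneBeforeOddRun k z i ≠ oneBeforeOddRun k (Function.update z p false) i) :
    (i = p ∧ Odd (runAfter k z p)) ∨
      (z i = true ∧ runAfter k z i + 1 = (p - i : Fin (2 * k + 1)) ∧ Even (runAfter k z p)) := by
  rcases eq_or_ne i p with rfl | hip
  · left
    simpa [oneBeforeOddRun, hp] using h
  right
  rw [oneBeforeOddRun, oneBeforeOddRun, Function.update_of_ne hip] at h
  cases hzi : z i
  · simp [hzi] at h
  have hlt := runAfter_lt_val_sub hp hip.symm
  rcases (Nat.succ_le_of_lt hlt).lt_or_eq with hlt' | heq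
  · rw [runAfter_update_of_lt hlt'] at h
    exact absurd rfl h
  · rw [runAfter_update_false hzi heq, ← heq] at h
    refine ⟨rfl, heq, ?_⟩
    rw [hzi, Bool.true_and, Bool.true_and, Ne, decide_eq_decide, Nat.odd_add, Nat.odd_add_one,
      ← Nat.not_odd_iff_even] at h
    rw [← Nat.not_odd_iff_even]
    tauto

theorem hammingDist_gmap_update_false_le_one {z : Fin (2 * k + 1) → Bool} {p : Fin (2 * k + 1)}
    (hp : z p = true) : hammingDist (gmap k z) (gmap k (Function.update z p false)) ≤ 1 := by
  rw [← hammingDist_comp_perm (Equiv.addRight 1)]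
  simp only [Function.comp_def, Equiv.coe_addRight, gmap_add_one]
  rw [hammingDist_comp (fun _ => not) (fun _ => Bool.not_injective)]
  refine Finset.card_le_one.2 fun i hi i' hi' => ?_
  rw [Finset.mem_filter] at hi hi'
  rcases eq_or_runAfter_add_one_eq_of_oneBeforeOddRun_ne hp hi.2 with
      ⟨rfl, hodd⟩ | ⟨hzi, hri, hev⟩ <;>
    rcases eq_or_runAfter_add_one_eq_of_oneBeforeOddRun_ne hp hi'.2 with
      ⟨rfl, hodd'⟩ | ⟨hzi', hri', hev'⟩
  · rfl
  · exact absurd hodd (Nat.not_odd_iff_even.2 hev')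
  · exact absurd hodd' (Nat.not_odd_iff_even.2 hev)
  · exact eq_of_runAfter_add_one_eq_val_sub hzi hzi' hri hri'

theorem hammingDist_gmap_update_le_one (z : Fin (2 * k + 1) → Bool) (p : Fin (2 * k + 1))
    (b : Bool) : hammingDist (gmap k z) (gmap k (Function.update z p b)) ≤ 1 := by
  rcases eq_or_ne b (z p) with rfl | hb
  · simp
  cases hzp : z p
  · obtain rfl : b = true := by simpa [hzp] using hb
    have key := hammingDist_gmap_update_false_le_one (z := Function.update z p true) (p := p)
      (Function.update_self p true z)
    rwa [Function.update_idem,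
      (Function.update_eq_self_iff.2 hzp.symm : Function.update z p false = z),
      hammingDist_comm] at key
  · obtain rfl : b = false := by simpa [hzp] using hb
    exact hammingDist_gmap_update_false_le_one hzp

theorem hammingDist_gmap_le (x y : Fin (2 * k + 1) → Bool) :
    hammingDist (gmap k x) (gmap k y) ≤ hammingDist x y :=
  hammingDist_le_of_forall_update (gmap k) hammingDist_gmap_update_le_one x y

theorem gmap_update_const_false (p : Fin (2 * k + 1)) :
    gmap k (Function.update (fun _ => false) p true) = fun _ => true := by
  funext j
  rw [← sub_add_cancel j 1, gmap_add_one]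
  rcases eq_or_ne (j - 1) p with hj | hj
  · have hrun : runAfter k (Function.update (fun _ => false) p true) p = 2 * k := by
      refine runAfter_eq_of (fun s h1 h2 => ?_) ?_
      · rw [Function.update_of_ne (Fin.add_natCast_ne_self p h1 (by omega))]
      · rw [Fin.natCast_self, add_zero, Function.update_self]
    simp [oneBeforeOddRun, hj, hrun]
  · simp [oneBeforeOddRun, Function.update_of_ne hj]

theorem hammingDist_gmap_const_true_lt {y : Fin (2 * k + 1) → Bool} (hy : y ≠ fun _ => false) :
    hammingDist (gmap k y) (fun _ => true) < hammingDist y (fun _ => false) := by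
  obtain ⟨p, hp⟩ : ∃ p, y p = true := by simpa [funext_iff] using hy
  have hdist := hammingDist_update_add_one (x := fun _ => false) (y := y) (i := p) (by simp [hp])
  rw [hp] at hdist
  calc hammingDist (gmap k y) (fun _ => true)
      = hammingDist (gmap k y) (gmap k (Function.update (fun _ => false) p true)) := by
        rw [gmap_update_const_false]
    _ ≤ hammingDist y (Function.update (fun _ => false) p true) := hammingDist_gmap_le _ _
    _ < hammingDist y (fun _ => false) := by
        rw [hammingDist_comm y, hammingDist_comm y]
        omega

theorem gmap_eq_self_of_isolated_zeros {x : Fin (2 * k + 1) → Bool}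
    (hx : ∀ i, x i = false → x (i + 1) = true) : gmap k x = x := by
  funext j
  rw [← sub_add_cancel j 1, gmap_add_one]
  set i := j - 1
  cases hi : x i
  · simp [oneBeforeOddRun, hi, hx i hi]
  cases hi1 : x (i + 1)
  · have hrun : runAfter k x i = 1 := by
      refine runAfter_eq_of (fun s h1 h2 => ?_) ?_
      · obtain rfl : s = 1 := by omega
        simpa using hi1
      · rw [Fin.add_natCast_add_one, Nat.cast_one]
        exact hx _ hi1
    simp [oneBeforeOddRun, hi, hrun]
  · have hrun : runAfter k x i = 0 := runAfter_eq_of (fun s h1 h2 => by omega) (by simpa using hi1)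
    simp [oneBeforeOddRun, hi, hrun]

theorem tau_eq_two_mul (j : Fin (2 * k + 1)) : tau k j = 2 * j := by
  rw [tau]
  split_ifs with h
  · rw [Nat.cast_mul, Nat.cast_ofNat, Fin.cast_val_eq_self]
  · rw [Nat.cast_sub (by omega), Fin.natCast_self, sub_zero, Nat.cast_mul, Nat.cast_ofNat,
      Fin.cast_val_eq_self]

theorem tauInv_eq_mul (j : Fin (2 * k + 1)) : tauInv k j = ((k + 1 : ℕ) : Fin (2 * k + 1)) * j := by
  have hzero : ((2 * k + 1 : ℕ) : Fin (2 * k + 1)) = 0 := Fin.natCast_self _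
  rw [tauInv]
  conv_rhs => rw [← Fin.cast_val_eq_self j, ← Nat.div_add_mod (j : ℕ) 2]
  split_ifs with h
  · rw [h]
    push_cast at hzero ⊢
    linear_combination (-(((j : ℕ) / 2 : ℕ) : Fin (2 * k + 1))) * hzero
  · rw [Nat.mod_two_ne_zero.1 h, show ((j : ℕ) + 1) / 2 = (j : ℕ) / 2 + 1 by omega]
    push_cast at hzero ⊢
    linear_combination (-(((j : ℕ) / 2 : ℕ) : Fin (2 * k + 1))) * hzero

theorem tau_tauInv (j : Fin (2 * k + 1)) : tau k (tauInv k j) = j := by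
  have hzero : ((2 * k + 1 : ℕ) : Fin (2 * k + 1)) = 0 := Fin.natCast_self _
  rw [tau_eq_two_mul, tauInv_eq_mul]
  push_cast at hzero ⊢
  linear_combination j * hzero

theorem tauInv_tau (j : Fin (2 * k + 1)) : tauInv k (tau k j) = j := by
  have hzero : ((2 * k + 1 : ℕ) : Fin (2 * k + 1)) = 0 := Fin.natCast_self _
  rw [tau_eq_two_mul, tauInv_eq_mul]
  push_cast at hzero ⊢
  linear_combination j * hzero

def tauPerm (k : ℕ) : Equiv.Perm (Fin (2 * k + 1)) := ⟨tau k, tauInv k, tauInv_tau, tau_tauInv⟩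

theorem xOcc_add_eq_true {i j : Fin (2 * k + 1)} (h : xOcc k i j = false) :
    xOcc k i (j + (k + 1 : ℕ)) = true := by
  simp only [xOcc, decide_eq_false_iff_not, not_le, decide_eq_true_eq] at h ⊢
  have hlt := (j - i).isLt
  rw [add_sub_right_comm, Fin.val_add_eq_ite, Fin.val_cast_of_lt (by omega)]
  split_ifs <;> omega

theorem hammingDist_fmap_le (x x' : Fin (2 * k + 1) → Bool) :
    hammingDist (fmap k x) (fmap k x') ≤ hammingDist x x' := by
  have hnot (u v : Fin (2 * k + 1) → Bool) :
      hammingDist (fun j => !u (tau k j)) (fun j => !v (tau k j)) = hammingDist u v :=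
    (hammingDist_comp (fun _ => not) fun _ => Bool.not_injective).trans
      (hammingDist_comp_perm (tauPerm k) u v)
  refine hammingDist_ite_snoc_le (fun x j => !gmap k (fun i => x (tauInv k i)) (tau k j))
    (fun x y => ?_) (fun x hx => ?_) x x'
  · rw [hnot, ← hammingDist_comp_perm (tauPerm k).symm x y]
    exact hammingDist_gmap_le _ _
  · have h0 := hnot (gmap k fun i => x (tauInv k i)) (fun _ => true)
    simp only [Bool.not_true] at h0
    rw [h0, ← hammingDist_comp_perm (tauPerm k).symm x]
    exact hammingDist_gmap_const_true_lt fun h =>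
      hx (funext fun j => by simpa [tauInv_tau] using congrFun h (tau k j))

theorem fmap_xOcc (i : Fin (2 * k + 1)) :
    fmap k (xOcc k i) = Fin.snoc (fun j => !xOcc k i j) true := by
  have hne : xOcc k i ≠ fun _ => false := fun h => by simpa [xOcc] using congrFun h i
  rw [fmap, if_neg hne, gmap_eq_self_of_isolated_zeros fun t ht => ?_]
  · simp only [tauInv_tau]
  · rw [tauInv_eq_mul, mul_add_one, ← tauInv_eq_mul]
    exact xOcc_add_eq_true ht

end Cyclic

theorem stmt17_general (k : ℕ) :
    (∀ x x' : Fin (2 * k + 1) → Bool,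
      hammingDist (fmap k x) (fmap k x') ≤ hammingDist x x') ∧
    (∀ i : Fin (2 * k + 1),
      fmap k (xOcc k i) = Fin.snoc (fun j => ! xOcc k i j) true) ∧
    fmap k (fun _ => false) = fun _ => false :=
  ⟨hammingDist_fmap_le, fmap_xOcc, if_pos rfl⟩

/-- `f_k` is a proof by contraction of the cyclic inequality
`C_{2k+1}(k+1,k)`: (i) it is a contraction with respect to the Hamming distance, and
(ii) it maps the occurrence vectors onto each other, `f_k(x_i) = y_i`, where
`y_i = (complement of x_i, 1)` is the cyclic shift by `i` of `0^{k+1} 1^k` followed by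
a final coordinate `1`, and `f_k(0) = 0` for the purifying region. -/
theorem stmt17 (k : ℕ) (hk : 1 ≤ k) :
    (∀ x x' : Fin (2 * k + 1) → Bool,
      hammingDist (fmap k x) (fmap k x') ≤ hammingDist x x') ∧
    (∀ i : Fin (2 * k + 1),
      fmap k (xOcc k i) = Fin.snoc (fun j => ! xOcc k i j) true) ∧
    fmap k (fun _ => false) = fun _ => false :=
  stmt17_general k
end

section
/- A new five-region holographic entropy inequality: for every graph model on 5 regions, writing A = {1}, B = {2}, C = {3}, D = {4}, E = {5} and concatenation for union, the discrete entropies satisfy 2·S*(ABC) + S*(ABD) + S*(ABE) + S*(ACD) + S*(ADE) + S*(BCE) + S*(BDE) ≥ S*(AB) + S*(ABCD) + S*(ABCE) + S*(ABDE) + S*(AC) + S*(AD) + S*(BC) + S*(BE) + S*(DE). -/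
open Classical

/-!
Proof by contraction. Choose minimal cuts `W j` for the seven regions on the left and record for
each vertex the bit vector of cuts containing it. A map `f : {0,1}^7 → {0,1}^9` that sends the
bit vector of every boundary colour to its bit vector for the nine regions on the right, and does
not increase distances from the `coeff`-weighted Hamming distance to the Hamming distance, turns
the `W j` into cuts for the right-hand regions: every edge crosses these at most as often as it
crosses the `W j`, counted with weights. Since the weighted Hamming distance is the path metric of
the hypercube, it suffices to check `f` on the `7 · 2^7` hypercube edges.
-/

section WeightedHamming

variable {ι : Type*} [Fintype ι]

def weightedHammingDist (m : ι → ℕ) (x y : ι → Bool) : ℕ :=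
  ∑ i, if x i = y i then 0 else m i

theorem weightedHammingDist_one (x y : ι → Bool) :
    weightedHammingDist 1 x y = hammingDist x y := by
  rw [hammingDist, Finset.card_filter, weightedHammingDist]
  exact Finset.sum_congr rfl fun i _ => by by_cases h : x i = y i <;> simp [h]

theorem weightedHammingDist_eq_add_update [DecidableEq ι] (m : ι → ℕ) {x y : ι → Bool} {j : ι}
    (hj : x j ≠ y j) :
    weightedHammingDist m x y = m j + weightedHammingDist m (Function.update x j (y j)) y := by
  have hpt : ∀ i, (if x i = y i then 0 else m i)
      = (if i = j then m j else 0) + if Function.update x j (y j) i = y i then 0 else m i := by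
    intro i
    by_cases hij : i = j
    · subst hij; simp [hj]
    · simp [hij]
  simp only [weightedHammingDist, hpt, Finset.sum_add_distrib, Finset.sum_ite_eq',
    Finset.mem_univ, if_true]

theorem hammingDist_le_weightedHammingDist_of_update [DecidableEq ι] {κ : Type*} [Fintype κ]
    (m : ι → ℕ) (f : (ι → Bool) → κ → Bool)
    (hf : ∀ x j, hammingDist (f x) (f (Function.update x j (!x j))) ≤ m j) (x y : ι → Bool) :
    hammingDist (f x) (f y) ≤ weightedHammingDist m x y := by
  induction hxy : hammingDist x y generalizing x with
  | zero => rw [hammingDist_eq_zero.mp hxy]; simp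
  | succ d ih =>
    obtain ⟨j, hj⟩ : ∃ j, x j ≠ y j := by
      by_contra! h
      exact absurd (hammingDist_eq_zero.mpr (funext h)) (by omega)
    have hflip : y j = !x j := Bool.eq_not.mpr hj.symm
    have hd : hammingDist (Function.update x j (y j)) y = d := by
      have := weightedHammingDist_eq_add_update 1 hj
      rw [weightedHammingDist_one, weightedHammingDist_one, hxy] at this
      simp only [Pi.one_apply] at this
      omega
    calc hammingDist (f x) (f y)
        ≤ hammingDist (f x) (f (Function.update x j (y j)))
          + hammingDist (f (Function.update x j (y j))) (f y) := hammingDist_triangle _ _ _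
      _ ≤ m j + weightedHammingDist m (Function.update x j (y j)) y := by
          gcongr
          · rw [hflip]; exact hf x j
          · exact ih _ hd
      _ = weightedHammingDist m x y := (weightedHammingDist_eq_add_update m hj).symm

end WeightedHamming

noncomputable def membershipPattern {α ι : Type*} (W : ι → Set α) (a : α) : ι → Bool :=
  fun i => decide (a ∈ W i)

def boundaryPattern {n : ℕ} {ι : Type*} (L : ι → Finset (Fin n)) (c : Fin (n + 1)) : ι → Bool :=
  fun j => decide (∃ i ∈ L j, Fin.castSucc i = c)

namespace GraphModel

variable {n : ℕ} (G : GraphModel n)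

theorem isCut_coloredIn (I : Finset (Fin n)) :
    G.IsCut I {v | ∃ i ∈ I, G.color v = some (Fin.castSucc i)} := by
  intro v c hc
  simp only [Set.mem_ofPred_eq, hc, Option.some.injEq, eq_comm]

theorem exists_isCut_cutWeight_eq_entropy (I : Finset (Fin n)) :
    ∃ W, G.IsCut I W ∧ G.cutWeight W = G.entropy I :=
  (Set.Nonempty.image _ ⟨_, G.isCut_coloredIn I⟩).csInf_mem ((Set.toFinite _).image _)

theorem entropy_le_cutWeight {I : Finset (Fin n)} {W : Set G.V} (hW : G.IsCut I W) :
    G.entropy I ≤ G.cutWeight W :=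
  csInf_le ((Set.toFinite _).image G.cutWeight).bddBelow ⟨W, hW, rfl⟩

theorem two_mul_cutWeight (W : Set G.V) :
    2 * G.cutWeight W = ∑ u, ∑ v, if (u ∈ W ↔ v ∈ W) then 0 else G.w u v := by
  have hswap : G.cutWeight W = ∑ u, ∑ v, if v ∈ W ∧ u ∉ W then G.w u v else 0 := by
    rw [cutWeight, Finset.sum_comm]
    simp only [G.symm]
  rw [two_mul]
  nth_rewrite 2 [hswap]
  rw [cutWeight, ← Finset.sum_add_distrib]
  refine Finset.sum_congr rfl fun u _ => ?_
  rw [← Finset.sum_add_distrib]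
  refine Finset.sum_congr rfl fun v _ => ?_
  by_cases hu : u ∈ W <;> by_cases hv : v ∈ W <;> simp [hu, hv]

theorem two_mul_sum_cutWeight {ι : Type*} [Fintype ι] (m : ι → ℕ) (W : ι → Set G.V) :
    2 * ∑ i, (m i : ℝ) * G.cutWeight (W i)
      = ∑ u, ∑ v, (weightedHammingDist m (membershipPattern W u) (membershipPattern W v) : ℝ)
          * G.w u v := by
  simp only [Finset.mul_sum, mul_left_comm (2 : ℝ), two_mul_cutWeight, weightedHammingDist,
    membershipPattern, decide_eq_decide, Nat.cast_sum, Finset.sum_mul]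
  rw [Finset.sum_comm]
  refine Finset.sum_congr rfl fun u _ => ?_
  rw [Finset.sum_comm]
  refine Finset.sum_congr rfl fun v _ => Finset.sum_congr rfl fun i _ => ?_
  split_ifs <;> simp

theorem sum_cutWeight_le_of_contraction {ι κ : Type*} [Fintype ι] [Fintype κ] (m : ι → ℕ)
    (f : (ι → Bool) → κ → Bool) (hf : ∀ x y, hammingDist (f x) (f y) ≤ weightedHammingDist m x y)
    (W : ι → Set G.V) :
    ∑ k, G.cutWeight {v | f (membershipPattern W v) k} ≤ ∑ j, (m j : ℝ) * G.cutWeight (W j) := by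
  have hpat : ∀ v, membershipPattern (fun k => {v | f (membershipPattern W v) k}) v
      = f (membershipPattern W v) := fun v => funext fun k => by simp [membershipPattern]
  have hU := G.two_mul_sum_cutWeight 1 fun k => {v | f (membershipPattern W v) k}
  simp only [Pi.one_apply, Nat.cast_one, one_mul, weightedHammingDist_one, hpat] at hU
  suffices 2 * ∑ k, G.cutWeight {v | f (membershipPattern W v) k}
      ≤ 2 * ∑ j, (m j : ℝ) * G.cutWeight (W j) by linarith
  rw [hU, G.two_mul_sum_cutWeight]
  gcongr with u _ v _
  · exact G.nonneg u v
  · exact_mod_cast hf _ _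

theorem sum_entropy_le_of_contraction {ι κ : Type*} [Fintype ι] [Fintype κ]
    (L : ι → Finset (Fin n)) (R : κ → Finset (Fin n)) (m : ι → ℕ) (f : (ι → Bool) → κ → Bool)
    (hf : ∀ x y, hammingDist (f x) (f y) ≤ weightedHammingDist m x y)
    (hbdry : ∀ c, f (boundaryPattern L c) = boundaryPattern R c) :
    ∑ k, G.entropy (R k) ≤ ∑ j, (m j : ℝ) * G.entropy (L j) := by
  choose W hW hWmin using fun j => G.exists_isCut_cutWeight_eq_entropy (L j)
  have hcut : ∀ k, G.IsCut (R k) {v | f (membershipPattern W v) k} := by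
    intro k v c hc
    have hv : membershipPattern W v = boundaryPattern L c :=
      funext fun j => decide_eq_decide.mpr (hW j v c hc)
    simp [hv, hbdry, boundaryPattern]
  calc ∑ k, G.entropy (R k) ≤ ∑ k, G.cutWeight {v | f (membershipPattern W v) k} :=
        Finset.sum_le_sum fun k _ => G.entropy_le_cutWeight (hcut k)
    _ ≤ ∑ j, (m j : ℝ) * G.cutWeight (W j) := G.sum_cutWeight_le_of_contraction m f hf W
    _ = ∑ j, (m j : ℝ) * G.entropy (L j) := by simp only [hWmin]

end GraphModel

namespace FiveRegionInequality

def lhs : Fin 7 → Finset (Fin 5) :=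
  ![{0, 1, 2}, {0, 1, 3}, {0, 1, 4}, {0, 2, 3}, {0, 3, 4}, {1, 2, 4}, {1, 3, 4}]

def coeff : Fin 7 → ℕ := ![2, 1, 1, 1, 1, 1, 1]

def rhs : Fin 9 → Finset (Fin 5) :=
  ![{0, 1}, {0, 1, 2, 3}, {0, 1, 2, 4}, {0, 1, 3, 4}, {0, 2}, {0, 3}, {1, 2}, {1, 4}, {3, 4}]

/-- Entry `a` is the image of the bit vector with binary digits `a` (digit `j` is `x j`); binary
digit `k` of the entry is coordinate `k` of the image. -/
def contractionTable : List ℕ :=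
  [0, 6, 2, 14, 4, 14, 6, 15, 2, 22, 10, 30, 6, 30, 14, 31,
   8, 14, 10, 30, 12, 30, 14, 31, 10, 30, 42, 62, 14, 62, 46, 63,
   4, 70, 6, 78, 12, 78, 14, 79, 6, 86, 14, 94, 14, 94, 15, 95,
   12, 78, 14, 14, 140, 14, 142, 15, 14, 94, 10, 30, 12, 30, 14, 31,
   8, 14, 10, 142, 12, 142, 14, 143, 10, 6, 266, 14, 14, 14, 270, 15,
   264, 10, 266, 14, 268, 14, 270, 15, 266, 14, 298, 46, 270, 46, 302, 47,
   12, 78, 14, 206, 140, 206, 142, 207, 14, 70, 10, 78, 12, 78, 14, 79,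
   268, 14, 270, 142, 396, 142, 398, 143, 270, 78, 266, 14, 268, 14, 270, 15]

def contraction (x : Fin 7 → Bool) : Fin 9 → Bool :=
  fun k => (contractionTable.getD (∑ j, (x j).toNat * 2 ^ (j : ℕ)) 0).testBit k

theorem contraction_boundaryPattern (c : Fin 6) :
    contraction (boundaryPattern lhs c) = boundaryPattern rhs c := by
  revert c
  decide +kernel

theorem hammingDist_contraction_update_le (x : Fin 7 → Bool) (j : Fin 7) :
    hammingDist (contraction x) (contraction (Function.update x j (!x j))) ≤ coeff j := by
  revert x j
  decide +kernel

theorem hammingDist_contraction_le (x y : Fin 7 → Bool) :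
    hammingDist (contraction x) (contraction y) ≤ weightedHammingDist coeff x y :=
  hammingDist_le_weightedHammingDist_of_update coeff contraction
    hammingDist_contraction_update_le x y

end FiveRegionInequality

/-- A new five-region holographic entropy inequality, with
`A = {1}, B = {2}, C = {3}, D = {4}, E = {5}` (here `0,…,4 : Fin 5`):
`2 S*(ABC) + S*(ABD) + S*(ABE) + S*(ACD) + S*(ADE) + S*(BCE) + S*(BDE)
 ≥ S*(AB) + S*(ABCD) + S*(ABCE) + S*(ABDE) + S*(AC) + S*(AD) + S*(BC) + S*(BE)
 + S*(DE)`. -/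
theorem stmt19 (G : GraphModel 5) :
    2 * G.entropy {0, 1, 2} + G.entropy {0, 1, 3} + G.entropy {0, 1, 4}
        + G.entropy {0, 2, 3} + G.entropy {0, 3, 4} + G.entropy {1, 2, 4}
        + G.entropy {1, 3, 4}
      ≥ G.entropy {0, 1} + G.entropy {0, 1, 2, 3} + G.entropy {0, 1, 2, 4}
        + G.entropy {0, 1, 3, 4} + G.entropy {0, 2} + G.entropy {0, 3}
        + G.entropy {1, 2} + G.entropy {1, 4} + G.entropy {3, 4} := by
  have h := G.sum_entropy_le_of_contraction FiveRegionInequality.lhs FiveRegionInequality.rhs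
    FiveRegionInequality.coeff FiveRegionInequality.contraction
    FiveRegionInequality.hammingDist_contraction_le
    FiveRegionInequality.contraction_boundaryPattern
  simp only [FiveRegionInequality.lhs, FiveRegionInequality.rhs, FiveRegionInequality.coeff,
    Fin.sum_univ_succ, Fin.sum_univ_zero, Matrix.cons_val_zero, Matrix.cons_val_succ,
    Nat.cast_ofNat, Nat.cast_one, one_mul, add_zero] at h
  linarith
end
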